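/- arXiv:2008.03664 — 3 statements merged into one kernel-verified Lean document; each statement's English description precedes it below -/
import Mathlib

section
/- For all u, v ∈ ℂ with u − v ∉ {0, cκ, −cκ}, the R-matrix satisfies the unitarity condition R(u,v) · R(v,u) = (1 − c²/(u−v)²) · (I ⊗ I). -/
open scoped Kronecker

noncomputable section

/-- Index set `{-n, …, n}` for matrices of size `N = 2n+1`. -/
abbrev Idx (n : ℕ) : Type := {i : ℤ // i ∈ Finset.Icc (-(n : ℤ)) (n : ℤ)}

/-- Negation `i ↦ -i` on the index set. -/
def Idx.neg {n : ℕ} (i : Idx n) : Idx n :=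
  ⟨-i.1, by
    have h := Finset.mem_Icc.mp i.2
    exact Finset.mem_Icc.mpr ⟨by omega, by omega⟩⟩

/-- Matrix unit `e_{i,j}`. -/
def matE {n : ℕ} (i j : Idx n) : Matrix (Idx n) (Idx n) ℂ :=
  Matrix.single i j 1

/-- `P = Σ_{i,j} e_{i,j} ⊗ e_{j,i}`. -/
def Pmat (n : ℕ) : Matrix (Idx n × Idx n) (Idx n × Idx n) ℂ :=
  ∑ i : Idx n, ∑ j : Idx n, matE i j ⊗ₖ matE j i

/-- `Q = Σ_{i,j} e_{i,j} ⊗ e_{-i,-j}`. -/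
def Qmat (n : ℕ) : Matrix (Idx n × Idx n) (Idx n × Idx n) ℂ :=
  ∑ i : Idx n, ∑ j : Idx n, matE i j ⊗ₖ matE i.neg j.neg

/-- `κ = n - 1/2`. -/
def kappa (n : ℕ) : ℂ := (n : ℂ) - 1 / 2

/-- The `o_{2n+1}`-invariant `R`-matrix
`R(u,v) = I⊗I + (c/(u−v)) P − (c/(u−v+cκ)) Q`. -/
def Rmat (n : ℕ) (c u v : ℂ) : Matrix (Idx n × Idx n) (Idx n × Idx n) ℂ :=
  1 + (c / (u - v)) • Pmat n - (c / (u - v + c * kappa n)) • Qmat n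


/-!
`P` is the permutation matrix of the flip `(i, j) ↦ (j, i)` and `Q = w wᵀ` for
`w = Σᵢ eᵢ ⊗ e₋ᵢ`, which is flip-invariant with `wᵀ w = 2n + 1`. Hence `P² = 1`, `PQ = QP = Q`
and `Q² = (2n + 1) Q`, the defining relations of the Brauer algebra `B₂(2n + 1)`. Unitarity
follows from these relations alone: in `R(u,v) R(v,u)` the `P`-terms cancel because the two
`P`-coefficients are opposite, and the `Q`-coefficient vanishes precisely because
`2n + 1 = 2κ + 2`.
-/

open Matrix

theorem unitarity_of_brauer_relations {K A : Type*} [Field K] [Ring A] [Algebra K A]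
    {P Q : A} {N : K} (hPP : P * P = 1) (hPQ : P * Q = Q) (hQP : Q * P = Q)
    (hQQ : Q * Q = N • Q) {c z κ : K} (hN : N = 2 * κ + 2) (hz : z ≠ 0)
    (hzκ : z + c * κ ≠ 0) (hzκ' : -z + c * κ ≠ 0) :
    (1 + (c / z) • P - (c / (z + c * κ)) • Q) * (1 + (c / -z) • P - (c / (-z + c * κ)) • Q) =
      (1 - c ^ 2 / z ^ 2) • 1 := by
  simp only [sub_mul, mul_sub, add_mul, mul_add, one_mul, mul_one, smul_mul_assoc,
    mul_smul_comm, hPP, hPQ, hQP, hQQ, smul_smul]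
  match_scalars
  · field_simp
    ring
  · field_simp
    ring
  · subst hN
    field_simp
    ring

section PermMatrix

variable {ι R : Type*} [DecidableEq ι] [Fintype ι] {σ : Equiv.Perm ι}

lemma permMatrix_mul_self_of_involutive [NonAssocSemiring R] (hσ : Function.Involutive σ) :
    σ.permMatrix R * σ.permMatrix R = 1 := by
  rw [← permMatrix_mul, show σ * σ = 1 from Equiv.ext hσ, permMatrix_one]

variable [CommRing R] {w : ι → R}

lemma permMatrix_mul_vecMulVec_of_comp_eq (hw : w ∘ σ = w) (v : ι → R) :
    σ.permMatrix R * vecMulVec w v = vecMulVec w v := by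
  rw [mul_vecMulVec, permMatrix_mulVec, hw]

lemma vecMulVec_mul_permMatrix_of_comp_eq (hw : w ∘ σ = w) (v : ι → R) :
    vecMulVec v w * σ.permMatrix R = vecMulVec v w := by
  have hw' : w ∘ σ.symm = w := by
    nth_rw 1 [← hw]
    rw [Function.comp_assoc, σ.self_comp_symm, Function.comp_id]
  rw [vecMulVec_mul, vecMul_permMatrix, hw']

end PermMatrix

lemma Idx.neg_involutive (n : ℕ) : Function.Involutive (Idx.neg (n := n)) := by
  intro i
  simp [Idx.neg]

def antidiagVec (n : ℕ) : Idx n × Idx n → ℂ := fun p => if p.1.neg = p.2 then 1 else 0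

lemma antidiagVec_comp_prodComm (n : ℕ) :
    antidiagVec n ∘ Equiv.prodComm (Idx n) (Idx n) = antidiagVec n := by
  ext ⟨a, b⟩
  exact if_congr ((Idx.neg_involutive n).eq_iff.trans eq_comm) rfl rfl

lemma card_Idx (n : ℕ) : Fintype.card (Idx n) = 2 * n + 1 := by
  simp only [Fintype.card_coe, Int.card_Icc]
  omega

lemma antidiagVec_dotProduct_self (n : ℕ) : antidiagVec n ⬝ᵥ antidiagVec n = 2 * n + 1 := by
  simp only [dotProduct, antidiagVec, mul_ite, mul_one, mul_zero, Fintype.sum_prod_type,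
    Fintype.sum_ite_eq, Finset.sum_const, Finset.card_univ, card_Idx, nsmul_eq_mul]
  push_cast
  ring

lemma Pmat_eq_permMatrix (n : ℕ) :
    Pmat n = Equiv.Perm.permMatrix ℂ (Equiv.prodComm (Idx n) (Idx n)) := by
  ext ⟨a, b⟩ ⟨c, d⟩
  simp [Pmat, matE, single_kronecker_single, Matrix.sum_apply, Matrix.single_apply, ite_and]

lemma Qmat_eq_vecMulVec (n : ℕ) : Qmat n = vecMulVec (antidiagVec n) (antidiagVec n) := by
  ext ⟨a, b⟩ ⟨c, d⟩
  simp only [Qmat, matE, single_kronecker_single, mul_one, Matrix.sum_apply, single_apply,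
    Prod.mk.injEq, ite_and, Finset.sum_ite_irrel, Fintype.sum_ite_eq', Finset.sum_const_zero,
    vecMulVec_apply, antidiagVec, mul_ite, mul_zero]
  split_ifs <;> rfl

lemma Pmat_mul_self (n : ℕ) : Pmat n * Pmat n = 1 := by
  rw [Pmat_eq_permMatrix]
  exact permMatrix_mul_self_of_involutive Prod.swap_swap

lemma Pmat_mul_Qmat (n : ℕ) : Pmat n * Qmat n = Qmat n := by
  rw [Pmat_eq_permMatrix, Qmat_eq_vecMulVec]
  exact permMatrix_mul_vecMulVec_of_comp_eq (antidiagVec_comp_prodComm n) _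

lemma Qmat_mul_Pmat (n : ℕ) : Qmat n * Pmat n = Qmat n := by
  rw [Pmat_eq_permMatrix, Qmat_eq_vecMulVec]
  exact vecMulVec_mul_permMatrix_of_comp_eq (antidiagVec_comp_prodComm n) _

lemma Qmat_mul_self (n : ℕ) : Qmat n * Qmat n = (2 * n + 1 : ℂ) • Qmat n := by
  rw [Qmat_eq_vecMulVec, vecMulVec_mul_vecMulVec, antidiagVec_dotProduct_self, vecMulVec_smul]

theorem statement2_general (n : ℕ) (c : ℂ) (u v : ℂ)
    (h0 : u - v ≠ 0) (h1 : u - v ≠ c * kappa n) (h2 : u - v ≠ -(c * kappa n)) :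
    Rmat n c u v * Rmat n c v u =
      (1 - c ^ 2 / (u - v) ^ 2) • (1 : Matrix (Idx n × Idx n) (Idx n × Idx n) ℂ) := by
  rw [Rmat, Rmat, ← neg_sub u v]
  refine unitarity_of_brauer_relations (Pmat_mul_self n) (Pmat_mul_Qmat n) (Qmat_mul_Pmat n)
    (Qmat_mul_self n) ?_ h0 (fun h => h2 (by linear_combination h))
    (fun h => h1 (by linear_combination -h))
  rw [kappa]
  ring

/-- the unitarity condition
`R(u,v)·R(v,u) = (1 − c²/(u−v)²)·(I ⊗ I)` for `u − v ∉ {0, cκ, −cκ}`. -/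
theorem statement2 (n : ℕ) (hn : 1 ≤ n) (c : ℂ) (hc : c ≠ 0) (u v : ℂ)
    (h0 : u - v ≠ 0) (h1 : u - v ≠ c * kappa n) (h2 : u - v ≠ -(c * kappa n)) :
    Rmat n c u v * Rmat n c v u =
      (1 - c ^ 2 / (u - v) ^ 2) • (1 : Matrix (Idx n × Idx n) (Idx n × Idx n) ℂ) :=
  statement2_general n c u v h0 h1 h2

end
end

section
/- Let χ_i ∈ ℂ \ {0} for −n ≤ i ≤ n with χ_0 = 1, and let K = diag(χ_{−n}, …, χ_{−1}, 1, χ_1, …, χ_n) ∈ M_N(ℂ). Fix u, v ∈ ℂ with u − v ≠ 0 and u − v + cκ ≠ 0. Then R(u,v) · (K ⊗ K) = (K ⊗ K) · R(u,v) if and only if χ_{−i} = χ_i^{−1} for all i = 1, …, n. -/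
/-!
`K ⊗ K` is diagonal, with weight `χ_i χ_j` at `(i, j)`, and a matrix commutes with a diagonal
matrix iff each of its nonzero entries joins two indices of equal weight. `P` only joins `(i, j)`
to `(j, i)`, which have the same weight, so (the coefficient of `Q` being nonzero) `R(u,v)`
commutes with `K ⊗ K` iff `Q` does. As `Q` joins every `(i, -i)` to every `(j, -j)`, this means
that `χ_i χ_{-i}` does not depend on `i`, i.e. equals `χ_0² = 1`.
-/

open scoped Kronecker

noncomputable section

namespace Matrix

variable {ι R : Type*} [Fintype ι] [DecidableEq ι]

theorem commute_diagonal_iff [CommRing R] [NoZeroDivisors R] (M : Matrix ι ι R) (d : ι → R) :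
    Commute M (diagonal d) ↔ ∀ i j, M i j ≠ 0 → d i = d j := by
  refine ext_iff.symm.trans (forall₂_congr fun i j => ?_)
  rw [mul_diagonal, diagonal_mul, mul_comm (d i), mul_eq_mul_left_iff, eq_comm]
  tauto

end Matrix

open Matrix

lemma matE_apply {n : ℕ} (i j a b : Idx n) :
    matE i j a b = if i = a ∧ j = b then 1 else 0 := rfl

@[simp]
lemma Idx.val_neg {n : ℕ} (i : Idx n) : (i.neg : ℤ) = -i := rfl

lemma Pmat_apply {n : ℕ} (p q : Idx n × Idx n) :
    Pmat n p q = if p = q.swap then 1 else 0 := by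
  simp only [Pmat, Matrix.sum_apply, kroneckerMap_apply, matE_apply, ite_mul, one_mul, zero_mul,
    ← ite_and]
  rw [Finset.sum_eq_single p.1 (by aesop) (by simp), Finset.sum_eq_single p.2 (by aesop) (by simp)]
  aesop

lemma Qmat_apply {n : ℕ} (p q : Idx n × Idx n) :
    Qmat n p q = if p.2 = p.1.neg ∧ q.2 = q.1.neg then 1 else 0 := by
  simp only [Qmat, Matrix.sum_apply, kroneckerMap_apply, matE_apply, ite_mul, one_mul, zero_mul,
    ← ite_and]
  rw [Finset.sum_eq_single p.1 (by aesop) (by simp), Finset.sum_eq_single q.1 (by aesop) (by simp)]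
  aesop

lemma Pmat_commute_diagonal_kronecker {n : ℕ} (x : Idx n → ℂ) :
    Commute (Pmat n) (diagonal x ⊗ₖ diagonal x) := by
  rw [diagonal_kronecker_diagonal, commute_diagonal_iff]
  rintro p ⟨q₁, q₂⟩ hpq
  obtain rfl : p = (q₂, q₁) := by simpa [Pmat_apply] using hpq
  exact mul_comm _ _

lemma Qmat_commute_diagonal_kronecker_iff {n : ℕ} (x : Idx n → ℂ) :
    Commute (Qmat n) (diagonal x ⊗ₖ diagonal x) ↔ ∀ i j, x i * x i.neg = x j * x j.neg := by
  rw [diagonal_kronecker_diagonal, commute_diagonal_iff]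
  constructor
  · intro h i j
    exact h (i, i.neg) (j, j.neg) (by simp [Qmat_apply])
  · rintro h ⟨p₁, p₂⟩ ⟨q₁, q₂⟩ hpq
    obtain ⟨rfl, rfl⟩ : p₂ = p₁.neg ∧ q₂ = q₁.neg := by simpa [Qmat_apply] using hpq
    exact h p₁ q₁

lemma Rmat_commute_iff {n : ℕ} {c u v : ℂ} (hQ : c / (u - v + c * kappa n) ≠ 0)
    {M : Matrix (Idx n × Idx n) (Idx n × Idx n) ℂ} (hP : Commute (Pmat n) M) :
    Commute (Rmat n c u v) M ↔ Commute (Qmat n) M := by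
  have hA : Commute (1 + (c / (u - v)) • Pmat n) M := (Commute.one_left M).add_left (hP.smul_left _)
  refine ⟨fun h => (Commute.smul_left_iff₀ hQ).mp ?_, fun h => hA.sub_left (h.smul_left _)⟩
  simpa [Rmat] using hA.sub_left h

lemma forall_mul_neg_eq_one_iff {G : Type*} [GroupWithZero G] {m : ℤ} {χ : ℤ → G}
    (hχ0 : χ 0 = 1) (hχ : ∀ i, -m ≤ i → i ≤ m → χ i ≠ 0) :
    (∀ i, -m ≤ i → i ≤ m → χ i * χ (-i) = 1) ↔ ∀ i, 1 ≤ i → i ≤ m → χ (-i) = (χ i)⁻¹ := by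
  refine ⟨fun h i hi hm => eq_inv_of_mul_eq_one_right (h i (by omega) hm), fun h i hi hm => ?_⟩
  rcases lt_trichotomy i 0 with hneg | rfl | hpos
  · rw [← neg_neg i, h (-i) (by omega) (by omega), neg_neg]
    exact inv_mul_cancel₀ (hχ (-i) (by omega) (by omega))
  · simp [hχ0]
  · rw [h i hpos hm]
    exact mul_inv_cancel₀ (hχ i hi hm)

theorem statement3_general (n : ℕ) (c : ℂ) (hc : c ≠ 0)
    (χ : ℤ → ℂ) (hχ0 : χ 0 = 1)
    (hχ : ∀ i : ℤ, -(n : ℤ) ≤ i → i ≤ (n : ℤ) → χ i ≠ 0)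
    (u v : ℂ) (h1 : u - v + c * kappa n ≠ 0) :
    (Rmat n c u v *
        (Matrix.diagonal (fun i : Idx n => χ i.1) ⊗ₖ Matrix.diagonal (fun i : Idx n => χ i.1)) =
      (Matrix.diagonal (fun i : Idx n => χ i.1) ⊗ₖ Matrix.diagonal (fun i : Idx n => χ i.1)) *
        Rmat n c u v) ↔
      (∀ i : ℤ, 1 ≤ i → i ≤ (n : ℤ) → χ (-i) = (χ i)⁻¹) := by
  change Commute _ _ ↔ _
  rw [Rmat_commute_iff (div_ne_zero hc h1) (Pmat_commute_diagonal_kronecker _),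
    Qmat_commute_diagonal_kronecker_iff, ← forall_mul_neg_eq_one_iff hχ0 hχ]
  constructor
  · intro h i hi hn
    simpa [hχ0] using h ⟨i, Finset.mem_Icc.mpr ⟨hi, hn⟩⟩ ⟨0, by simp⟩
  · intro h i j
    have hmem := fun k : Idx n => Finset.mem_Icc.mp k.2
    rw [Idx.val_neg, Idx.val_neg, h i (hmem i).1 (hmem i).2, h j (hmem j).1 (hmem j).2]

/-- for a diagonal matrix `K = diag(χ_{-n},…,χ_n)` with nonzero
entries and `χ_0 = 1`, one has `R(u,v)·(K ⊗ K) = (K ⊗ K)·R(u,v)` if and only if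
`χ_{-i} = χ_i⁻¹` for all `i = 1, …, n`. -/
theorem statement3 (n : ℕ) (hn : 1 ≤ n) (c : ℂ) (hc : c ≠ 0)
    (χ : ℤ → ℂ) (hχ0 : χ 0 = 1)
    (hχ : ∀ i : ℤ, -(n : ℤ) ≤ i → i ≤ (n : ℤ) → χ i ≠ 0)
    (u v : ℂ) (h0 : u - v ≠ 0) (h1 : u - v + c * kappa n ≠ 0) :
    (Rmat n c u v *
        (Matrix.diagonal (fun i : Idx n => χ i.1) ⊗ₖ Matrix.diagonal (fun i : Idx n => χ i.1)) =
      (Matrix.diagonal (fun i : Idx n => χ i.1) ⊗ₖ Matrix.diagonal (fun i : Idx n => χ i.1)) *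
        Rmat n c u v) ↔
      (∀ i : ℤ, 1 ≤ i → i ≤ (n : ℤ) → χ (-i) = (χ i)⁻¹) :=
  statement3_general n c hc χ hχ0 hχ u v h1

end
end

section
/- Suppose T : ℂ → M_N(A) satisfies the polynomial RTT relation: for all u, v ∈ ℂ, R̂(u,v) T₁(u) T₂(v) = T₂(v) T₁(u) R̂(u,v), where R̂(u,v) = (u−v)(u−v+cκ) (I⊗I) + c(u−v+cκ) P − c(u−v) Q. Then for every u ∈ ℂ there exists an element z(u) ∈ A such that for all −n ≤ i, j ≤ n: Σ_{m=−n}^{n} T_{−m,−i}(u−cκ) T_{m,j}(u) = δ_{i,j} z(u) and Σ_{m=−n}^{n} T_{i,m}(u) T_{−j,−m}(u−cκ) = δ_{i,j} z(u). -/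
/-!
At the point `(u − cκ, u)` the `R`-matrix degenerates to `c²κ Q` with `c²κ ≠ 0`, so the RTT
relation says `Q · T₁(u − cκ) T₂(u) = T₂(u) T₁(u − cκ) · Q`. Row `(a, b)` of the left side vanishes unless
`a = −b`, and column `(c, d)` of the right side vanishes unless `c = −d`; comparing entries, both
families of sums are supported on these "antidiagonals" and take one common value `z(u)` there.
-/

open scoped Kronecker

noncomputable section

/-- The polynomial `R`-matrix
`R̂(u,v) = (u−v)(u−v+cκ)(I⊗I) + c(u−v+cκ)P − c(u−v)Q`. -/
def Rhat (n : ℕ) (c u v : ℂ) : Matrix (Idx n × Idx n) (Idx n × Idx n) ℂ :=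
  ((u - v) * (u - v + c * kappa n)) • (1 : Matrix (Idx n × Idx n) (Idx n × Idx n) ℂ) +
    (c * (u - v + c * kappa n)) • Pmat n - (c * (u - v)) • Qmat n

lemma Idx.neg_neg {n : ℕ} (i : Idx n) : i.neg.neg = i := by simp [Idx.neg]

lemma Idx.neg_inj {n : ℕ} {i j : Idx n} : i.neg = j.neg ↔ i = j :=
  ⟨fun h => by rw [← Idx.neg_neg i, h, Idx.neg_neg], congrArg Idx.neg⟩

lemma Idx.eq_neg_comm {n : ℕ} {i j : Idx n} : i = j.neg ↔ j = i.neg :=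
  ⟨fun h => by rw [h, Idx.neg_neg], fun h => by rw [h, Idx.neg_neg]⟩

lemma kappa_ne_zero (n : ℕ) : kappa n ≠ 0 := by
  unfold kappa
  intro h
  have h2 : ((2 * n : ℕ) : ℂ) = ((1 : ℕ) : ℂ) := by
    push_cast
    linear_combination 2 * h
  have := Nat.cast_injective h2
  omega

lemma Rhat_sub_kappa (n : ℕ) (c u : ℂ) :
    Rhat n c (u - c * kappa n) u = (c * c * kappa n) • Qmat n := by
  simp only [Rhat]
  module

lemma Qmat_apply_s7 (n : ℕ) (a b x y : Idx n) :
    Qmat n (a, b) (x, y) = if a = b.neg ∧ x = y.neg then 1 else 0 := by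
  simp only [Qmat, Matrix.sum_apply, Matrix.kroneckerMap_apply, matE, Matrix.single_apply]
  rw [Fintype.sum_eq_single a fun i hi => by simp [hi],
    Fintype.sum_eq_single x fun j hj => by simp [hj]]
  simp [Idx.eq_neg_comm (i := a), Idx.eq_neg_comm (i := x), eq_comm]

section Kronecker

variable {l m : Type*} [Fintype l] [Fintype m] [DecidableEq l] [DecidableEq m]
  {R : Type*} [Semiring R]

lemma kronecker_one_mul_one_kronecker_apply (S : Matrix l l R) (S' : Matrix m m R)
    (a c : l) (b d : m) :
    ((S ⊗ₖ (1 : Matrix m m R)) * ((1 : Matrix l l R) ⊗ₖ S')) (a, b) (c, d) = S a c * S' b d := by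
  simp [Matrix.mul_apply, Fintype.sum_prod_type, Matrix.one_apply]

lemma one_kronecker_mul_kronecker_one_apply (S : Matrix l l R) (S' : Matrix m m R)
    (a c : l) (b d : m) :
    (((1 : Matrix l l R) ⊗ₖ S') * (S ⊗ₖ (1 : Matrix m m R))) (a, b) (c, d) = S' b d * S a c := by
  simp [Matrix.mul_apply, Fintype.sum_prod_type, Matrix.one_apply]

end Kronecker

section Qmat

variable {n : ℕ} {A : Type*} [Semiring A] [Algebra ℂ A]

lemma Qmat_map_mul_apply (X : Matrix (Idx n × Idx n) (Idx n × Idx n) A) (a b : Idx n)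
    (q : Idx n × Idx n) :
    ((Qmat n).map (algebraMap ℂ A) * X) (a, b) q =
      if a = b.neg then ∑ y : Idx n, X (y.neg, y) q else 0 := by
  simp only [Matrix.mul_apply, Fintype.sum_prod_type, Qmat_apply_s7, Matrix.map_apply, ite_and,
    apply_ite (algebraMap ℂ A), map_one, map_zero, ite_mul, one_mul, zero_mul,
    Finset.sum_ite_irrel, Finset.sum_const_zero]
  rw [Finset.sum_comm]
  simp

lemma mul_Qmat_map_apply (X : Matrix (Idx n × Idx n) (Idx n × Idx n) A) (p : Idx n × Idx n)
    (c d : Idx n) :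
    (X * (Qmat n).map (algebraMap ℂ A)) p (c, d) =
      if c = d.neg then ∑ y : Idx n, X p (y.neg, y) else 0 := by
  simp only [Matrix.mul_apply, Fintype.sum_prod_type, Qmat_apply_s7, Matrix.map_apply, ite_and,
    apply_ite (algebraMap ℂ A), map_one, map_zero, mul_ite, mul_one, mul_zero]
  rw [Finset.sum_comm]
  simp

lemma Qmat_map_mul_eq_of_Rhat {c u : ℂ} (hc : c ≠ 0)
    {X Y : Matrix (Idx n × Idx n) (Idx n × Idx n) A}
    (h : (Rhat n c (u - c * kappa n) u).map (algebraMap ℂ A) * X =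
      Y * (Rhat n c (u - c * kappa n) u).map (algebraMap ℂ A)) :
    (Qmat n).map (algebraMap ℂ A) * X = Y * (Qmat n).map (algebraMap ℂ A) := by
  have hs : c * c * kappa n ≠ 0 := mul_ne_zero (mul_ne_zero hc hc) (kappa_ne_zero n)
  rw [Rhat_sub_kappa, Matrix.map_smul _ _ fun a => by simp [Algebra.smul_def], smul_mul_assoc,
    mul_smul_comm] at h
  exact smul_right_injective _ hs h

end Qmat

theorem exists_eq_ite_of_ite_eq_ite {ι M : Type*} [DecidableEq ι] [Zero M] [Nonempty ι]
    (σ : ι → ι) {F G : ι → ι → M}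
    (h : ∀ a b c d, (if a = σ b then F c d else 0) = if c = σ d then G a b else 0) :
    ∃ z, (∀ c d, F c d = if c = σ d then z else 0) ∧ ∀ a b, G a b = if a = σ b then z else 0 := by
  obtain ⟨i⟩ := ‹Nonempty ι›
  have hF : ∀ c d, F c d = if c = σ d then G (σ i) i else 0 := fun c d => by
    simpa using h (σ i) i c d
  refine ⟨G (σ i) i, hF, fun a b => ?_⟩
  simpa [hF] using (h a b (σ i) i).symm

theorem statement7_general (n : ℕ) (c : ℂ) (hc : c ≠ 0)
    {A : Type*} [Ring A] [Algebra ℂ A]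
    (T : ℂ → Matrix (Idx n) (Idx n) A)
    (hT : ∀ u v : ℂ,
      (Rhat n c u v).map (algebraMap ℂ A) * (T u ⊗ₖ (1 : Matrix (Idx n) (Idx n) A)) *
          ((1 : Matrix (Idx n) (Idx n) A) ⊗ₖ T v) =
        ((1 : Matrix (Idx n) (Idx n) A) ⊗ₖ T v) * (T u ⊗ₖ (1 : Matrix (Idx n) (Idx n) A)) *
          (Rhat n c u v).map (algebraMap ℂ A)) :
    ∀ u : ℂ, ∃ z : A, ∀ i j : Idx n,
      (∑ m : Idx n, T (u - c * kappa n) m.neg i.neg * T u m j =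
        if i = j then z else 0) ∧
      (∑ m : Idx n, T u i m * T (u - c * kappa n) j.neg m.neg =
        if i = j then z else 0) := by
  intro u
  set w := u - c * kappa n
  have hRTT := hT w u
  rw [mul_assoc] at hRTT
  have hQ := Qmat_map_mul_eq_of_Rhat hc hRTT
  have hentries : ∀ a b c' d : Idx n,
      (if a = b.neg then ∑ y, T w y.neg c' * T u y d else 0) =
        if c' = d.neg then ∑ y, T u b y * T w a y.neg else 0 := fun a b c' d => by
    simpa [Qmat_map_mul_apply, mul_Qmat_map_apply, kronecker_one_mul_one_kronecker_apply,
      one_kronecker_mul_kronecker_one_apply] using congrFun (congrFun hQ (a, b)) (c', d)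
  have : Nonempty (Idx n) := ⟨⟨0, by simp⟩⟩
  obtain ⟨z, hF, hG⟩ := exists_eq_ite_of_ite_eq_ite Idx.neg hentries
  refine ⟨z, fun i j => ⟨?_, ?_⟩⟩
  · simpa [Idx.neg_inj] using hF i.neg j
  · simpa [Idx.neg_inj, eq_comm] using hG j.neg i

/-- if `T : ℂ → M_N(A)` satisfies the polynomial RTT relation,
then for every `u` there is a central-type element `z(u) ∈ A` with
`Σ_m T_{−m,−i}(u−cκ) T_{m,j}(u) = δ_{i,j} z(u)` and
`Σ_m T_{i,m}(u) T_{−j,−m}(u−cκ) = δ_{i,j} z(u)` for all `i, j`. -/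
theorem statement7 (n : ℕ) (hn : 1 ≤ n) (c : ℂ) (hc : c ≠ 0)
    {A : Type*} [Ring A] [Algebra ℂ A]
    (T : ℂ → Matrix (Idx n) (Idx n) A)
    (hT : ∀ u v : ℂ,
      (Rhat n c u v).map (algebraMap ℂ A) * (T u ⊗ₖ (1 : Matrix (Idx n) (Idx n) A)) *
          ((1 : Matrix (Idx n) (Idx n) A) ⊗ₖ T v) =
        ((1 : Matrix (Idx n) (Idx n) A) ⊗ₖ T v) * (T u ⊗ₖ (1 : Matrix (Idx n) (Idx n) A)) *
          (Rhat n c u v).map (algebraMap ℂ A)) :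
    ∀ u : ℂ, ∃ z : A, ∀ i j : Idx n,
      (∑ m : Idx n, T (u - c * kappa n) m.neg i.neg * T u m j =
        if i = j then z else 0) ∧
      (∑ m : Idx n, T u i m * T (u - c * kappa n) j.neg m.neg =
        if i = j then z else 0) :=
  statement7_general n c hc T hT

end
end
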